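/- Let R be a commutative ring, d_1 ≥ … ≥ d_n integers, D = diag(t^{d_1}, …, t^{d_n}), K = GL_n(R[[t]]), K₁ = {k ∈ K : k ≡ I mod t}, and let E(R) ⊆ GL_n(R) × GL_n(R) be the group of pairs (p_−, p_+) with p_− ∈ P_−, p_+ ∈ P_+ having the same Levi component. Consider the right action of E(R) on GL_n(R) × GL_n(R) by (g,h)·(p_−,p_+) = (p_−⁻¹ g, p_+⁻¹ h). Then the map (g, h) ↦ K₁ · g⁻¹ D h · K₁ induces a well-defined bijection from the set of E(R)-orbits on GL_n(R) × GL_n(R) onto the set of double cosets K₁ x K₁ with x ∈ K D K = {k D k' : k, k' ∈ K}. -/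

import Mathlib

open Matrix

noncomputable section

/-- The inclusion `GL_n(R[[t]]) → GL_n(R((t)))`. -/
def psUnits (R : Type*) [CommRing R] (n : ℕ) :
    GL (Fin n) (PowerSeries R) →* GL (Fin n) (LaurentSeries R) :=
  Units.map ((HahnSeries.ofPowerSeries ℤ R).mapMatrix).toMonoidHom

/-- The inclusion `GL_n(R) → GL_n(R((t)))` as constant matrices. -/
def cUnits (R : Type*) [CommRing R] (n : ℕ) :
    GL (Fin n) R →* GL (Fin n) (LaurentSeries R) :=
  Units.map (((HahnSeries.ofPowerSeries ℤ R).comp (PowerSeries.C (R := R))).mapMatrix).toMonoidHom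

/-- Reduction modulo `t` of a matrix over `R[[t]]`. -/
def redMat (R : Type*) [CommRing R] (n : ℕ) :
    Matrix (Fin n) (Fin n) (PowerSeries R) →+* Matrix (Fin n) (Fin n) R :=
  (PowerSeries.constantCoeff (R := R)).mapMatrix


/-!
Everything rests on one observation about `D = diag(t^{d_i})`: a pair `(p, q)` lies in `E(R)`
iff it is the reduction mod `t` of a pair `(w, z) ∈ K × K` with `w D = D z`. Comparing constant
terms in `w_ij t^{d_j} = t^{d_i} z_ij` gives the block conditions; conversely
`w_ij = c_ij t^{(d_i - d_j)⁺}`, `z_ij = c_ij t^{(d_j - d_i)⁺}` lifts any pair in `E(R)`, and these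
lifts are invertible because their reductions are. Independently, pure group theory shows that
`g₂⁻¹ D h₂ ∈ K₁ g₁⁻¹ D h₁ K₁` iff such `(w, z)` exist with `w ≡ g₁ g₂⁻¹` and `z ≡ h₁ h₂⁻¹`
mod `t`, and surjectivity is `K = K₁ · GL_n(R)`.
-/

open scoped PowerSeries LaurentSeries
open PowerSeries (constantCoeff monomial)

section DoubleCoset

variable {K H G : Type*} [Group K] [Group H] [Group G] (ψ : K →* G) (π : K →* H) (σ : H →* K)

theorem exists_ker_mul_mul_ker_iff (hσ : ∀ h, π (σ h) = h) (D : G) (g₁ h₁ g₂ h₂ : H) :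
    (∃ k₁ k₂ : K, π k₁ = 1 ∧ π k₂ = 1 ∧
        ψ (σ g₂⁻¹) * D * ψ (σ h₂) = ψ k₁ * (ψ (σ g₁⁻¹) * D * ψ (σ h₁)) * ψ k₂) ↔
      ∃ w z : K, ψ w * D = D * ψ z ∧ π w = g₁ * g₂⁻¹ ∧ π z = h₁ * h₂⁻¹ := by
  constructor
  · rintro ⟨k₁, k₂, hk₁, hk₂, heq⟩
    refine ⟨σ g₁ * k₁⁻¹ * σ g₂⁻¹, σ h₁ * k₂ * σ h₂⁻¹, ?_, by simp [hσ, hk₁], by simp [hσ, hk₂]⟩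
    simp only [map_mul, map_inv] at heq ⊢
    calc ψ (σ g₁) * (ψ k₁)⁻¹ * (ψ (σ g₂))⁻¹ * D
        = ψ (σ g₁) * (ψ k₁)⁻¹ * ((ψ (σ g₂))⁻¹ * D * ψ (σ h₂)) * (ψ (σ h₂))⁻¹ := by group
      _ = D * (ψ (σ h₁) * ψ k₂ * (ψ (σ h₂))⁻¹) := by rw [heq]; group
  · rintro ⟨w, z, hwz, hw, hz⟩
    refine ⟨σ g₂⁻¹ * w⁻¹ * σ g₁, σ h₁⁻¹ * z * σ h₂, ?_, ?_, ?_⟩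
    · simp only [map_mul, map_inv, hσ, hw]; group
    · simp only [map_mul, map_inv, hσ, hz]; group
    · simp only [map_mul, map_inv]
      calc (ψ (σ g₂))⁻¹ * D * ψ (σ h₂)
          = (ψ (σ g₂))⁻¹ * (ψ w)⁻¹ * (ψ w * D) * ψ (σ h₂) := by group
        _ = _ := by rw [hwz]; group

theorem exists_eq_ker_mul_mul_ker (hσ : ∀ h, π (σ h) = h) (D : G) (u v : K) :
    ∃ g h : H, ∃ k₁ k₂ : K, π k₁ = 1 ∧ π k₂ = 1 ∧
      ψ u * D * ψ v = ψ k₁ * (ψ (σ g⁻¹) * D * ψ (σ h)) * ψ k₂ := by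
  refine ⟨(π u)⁻¹, π v, u * σ (π u)⁻¹, σ (π v)⁻¹ * v, by simp [hσ], by simp [hσ], ?_⟩
  simp only [map_mul, map_inv, inv_inv]
  group

end DoubleCoset

section PowerSeries

variable {R : Type*} [CommRing R]

theorem HahnSeries.ofPowerSeries_monomial (k : ℕ) (r : R) :
    ((monomial k r : R⟦X⟧) : R⸨X⸩) = HahnSeries.single (k : ℤ) r := by
  rw [PowerSeries.monomial_eq_C_mul_X_pow, map_mul, HahnSeries.ofPowerSeries_C,
    HahnSeries.ofPowerSeries_X_pow, HahnSeries.C_apply, HahnSeries.single_mul_single, zero_add,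
    mul_one]

theorem PowerSeries.constantCoeff_monomial (k : ℕ) (r : R) :
    constantCoeff (monomial k r) = if k = 0 then r else 0 := by
  simp [← PowerSeries.coeff_zero_eq_constantCoeff_apply, PowerSeries.coeff_monomial, eq_comm]

theorem constantCoeff_eq_coeff_of_mul_single_eq {f g : R⟦X⟧} {a b : ℤ}
    (h : (f : R⸨X⸩) * HahnSeries.single a 1 = HahnSeries.single b 1 * (g : R⸨X⸩)) :
    constantCoeff f = (g : R⸨X⸩).coeff (a - b) :=
  calc constantCoeff f = ((f : R⸨X⸩) * HahnSeries.single a 1).coeff (0 + a) := by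
        rw [HahnSeries.coeff_mul_single_add, mul_one]
        simpa using (LaurentSeries.coeff_coe_powerSeries f 0).symm
    _ = (HahnSeries.single b 1 * (g : R⸨X⸩)).coeff (a - b + b) := by
        rw [h, zero_add, sub_add_cancel]
    _ = (g : R⸨X⸩).coeff (a - b) := by rw [HahnSeries.coeff_single_mul_add, one_mul]

theorem Matrix.exists_units_val_eq_of_map_constantCoeff {m : Type*} [Fintype m] [DecidableEq m]
    {w : Matrix m m R⟦X⟧} {p : GL m R} (hw : w.map constantCoeff = p) :
    ∃ W : GL m R⟦X⟧, (W : Matrix m m R⟦X⟧) = w := by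
  have hdet : IsUnit (constantCoeff w.det) := by
    rw [RingHom.map_det, RingHom.mapMatrix_apply, hw]
    exact (Matrix.isUnit_iff_isUnit_det _).1 p.isUnit
  exact ⟨((Matrix.isUnit_iff_isUnit_det w).2 (PowerSeries.isUnit_iff_constantCoeff.2 hdet)).unit,
    rfl⟩

end PowerSeries

section ZipPair

variable {R : Type*} [CommRing R] {m : Type*} [Fintype m] [DecidableEq m]

/-- Membership of `(A, B)` in the zip group `E(R)`. -/
def IsZipPair (d : m → ℤ) (A B : Matrix m m R) : Prop :=
  (∀ i j, d i > d j → A i j = 0) ∧ (∀ i j, d i < d j → B i j = 0) ∧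
    (∀ i j, d i = d j → A i j = B i j)

theorem map_mul_diagonal_eq_iff {d : m → ℤ} {w z : Matrix m m R⟦X⟧} :
    w.map (HahnSeries.ofPowerSeries ℤ R) * diagonal (fun i => HahnSeries.single (d i) 1) =
        diagonal (fun i => HahnSeries.single (d i) 1) * z.map (HahnSeries.ofPowerSeries ℤ R) ↔
      ∀ i j, (w i j : R⸨X⸩) * HahnSeries.single (d j) 1 =
        HahnSeries.single (d i) 1 * (z i j : R⸨X⸩) := by
  simp [← Matrix.ext_iff, mul_diagonal, diagonal_mul]

theorem isZipPair_of_map_mul_diagonal_eq {d : m → ℤ} {w z : Matrix m m R⟦X⟧}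
    (hwz : w.map (HahnSeries.ofPowerSeries ℤ R) * diagonal (fun i => HahnSeries.single (d i) 1) =
      diagonal (fun i => HahnSeries.single (d i) 1) * z.map (HahnSeries.ofPowerSeries ℤ R)) :
    IsZipPair d (w.map constantCoeff) (z.map constantCoeff) := by
  rw [map_mul_diagonal_eq_iff] at hwz
  have hw i j := constantCoeff_eq_coeff_of_mul_single_eq (hwz i j)
  have hz i j := constantCoeff_eq_coeff_of_mul_single_eq
    ((mul_comm _ _).trans <| (hwz i j).symm.trans (mul_comm _ _))
  refine ⟨fun i j hij => ?_, fun i j hij => ?_, fun i j hij => ?_⟩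
  · simp [hw i j, PowerSeries.coeff_coe, hij]
  · simp [hz i j, PowerSeries.coeff_coe, hij]
  · simp [hw i j, PowerSeries.coeff_coe, hij]

theorem IsZipPair.exists_map_mul_diagonal_eq {d : m → ℤ} {A B : Matrix m m R}
    (h : IsZipPair d A B) :
    ∃ w z : Matrix m m R⟦X⟧,
      w.map (HahnSeries.ofPowerSeries ℤ R) * diagonal (fun i => HahnSeries.single (d i) 1) =
        diagonal (fun i => HahnSeries.single (d i) 1) * z.map (HahnSeries.ofPowerSeries ℤ R) ∧
      w.map constantCoeff = A ∧ z.map constantCoeff = B := by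
  obtain ⟨hA, hB, hAB⟩ := h
  let c : Matrix m m R := Matrix.of fun i j => if d i < d j then A i j else B i j
  refine ⟨Matrix.of fun i j => monomial (d i - d j).toNat (c i j),
    Matrix.of fun i j => monomial (d j - d i).toNat (c i j), ?_, ?_, ?_⟩
  · refine map_mul_diagonal_eq_iff.2 fun i j => ?_
    simp only [Matrix.of_apply, HahnSeries.ofPowerSeries_monomial, HahnSeries.single_mul_single,
      mul_one, one_mul]
    congr 2
    omega
  · ext i j
    rcases lt_trichotomy (d i) (d j) with hij | hij | hij
    · simp [c, PowerSeries.constantCoeff_monomial, hij, hij.not_gt]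
    · simp [c, hij, hAB i j hij]
    · simp [c, PowerSeries.constantCoeff_monomial, hij, hA i j hij]
  · ext i j
    rcases lt_trichotomy (d i) (d j) with hij | hij | hij
    · simp [c, PowerSeries.constantCoeff_monomial, hij, hB i j hij]
    · simp [c, hij]
    · simp [c, PowerSeries.constantCoeff_monomial, hij.not_gt]

end ZipPair

section GeneralLinear

variable (R : Type*) [CommRing R] (n : ℕ)

def redUnits : GL (Fin n) R⟦X⟧ →* GL (Fin n) R :=
  Units.map (redMat R n).toMonoidHom

def constUnits : GL (Fin n) R →* GL (Fin n) R⟦X⟧ :=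
  Units.map (PowerSeries.C (R := R)).mapMatrix.toMonoidHom

variable {R n}

theorem redUnits_constUnits (g : GL (Fin n) R) : redUnits R n (constUnits R n g) = g := by
  ext i j
  simp [redUnits, constUnits, redMat]

theorem psUnits_constUnits (g : GL (Fin n) R) : psUnits R n (constUnits R n g) = cUnits R n g :=
  rfl

theorem redMat_eq_one_iff (k : GL (Fin n) R⟦X⟧) :
    redMat R n (k : Matrix (Fin n) (Fin n) R⟦X⟧) = 1 ↔ redUnits R n k = 1 := by
  rw [← Units.val_eq_one]
  rfl

theorem isZipPair_iff_exists_psUnits_mul_eq {d : Fin n → ℤ} {D : GL (Fin n) R⸨X⸩}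
    (hD : (D : Matrix (Fin n) (Fin n) R⸨X⸩) = diagonal fun i => HahnSeries.single (d i) (1 : R))
    (p q : GL (Fin n) R) :
    IsZipPair d (p : Matrix (Fin n) (Fin n) R) q ↔
      ∃ w z : GL (Fin n) R⟦X⟧, psUnits R n w * D = D * psUnits R n z ∧
        redUnits R n w = p ∧ redUnits R n z = q := by
  constructor
  · intro h
    obtain ⟨w, z, hwz, hw, hz⟩ := h.exists_map_mul_diagonal_eq
    obtain ⟨W, rfl⟩ := Matrix.exists_units_val_eq_of_map_constantCoeff hw
    obtain ⟨Z, rfl⟩ := Matrix.exists_units_val_eq_of_map_constantCoeff hz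
    exact ⟨W, Z, Units.ext (by rw [Units.val_mul, Units.val_mul, hD]; exact hwz),
      Units.ext hw, Units.ext hz⟩
  · rintro ⟨w, z, hwz, rfl, rfl⟩
    have hwz := congrArg Units.val hwz
    rw [Units.val_mul, Units.val_mul, hD] at hwz
    exact isZipPair_of_map_mul_diagonal_eq hwz

end GeneralLinear

theorem viehmann_stmt6_general (R : Type*) [CommRing R] (n : ℕ)
    (d : Fin n → ℤ)
    (D : GL (Fin n) (LaurentSeries R))
    (hD : (D : Matrix (Fin n) (Fin n) (LaurentSeries R)) =
      Matrix.diagonal fun i => HahnSeries.single (d i) (1 : R)) :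
    (∀ g₁ h₁ g₂ h₂ : GL (Fin n) R,
      (∃ pm pp : GL (Fin n) R,
        (∀ i j : Fin n, d i > d j → (pm : Matrix (Fin n) (Fin n) R) i j = 0) ∧
        (∀ i j : Fin n, d i < d j → (pp : Matrix (Fin n) (Fin n) R) i j = 0) ∧
        (∀ i j : Fin n, d i = d j →
          (pm : Matrix (Fin n) (Fin n) R) i j = (pp : Matrix (Fin n) (Fin n) R) i j) ∧
        g₂ = pm⁻¹ * g₁ ∧ h₂ = pp⁻¹ * h₁) ↔
      (∃ k₁ k₂ : GL (Fin n) (PowerSeries R),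
        redMat R n (k₁ : Matrix (Fin n) (Fin n) (PowerSeries R)) = 1 ∧
        redMat R n (k₂ : Matrix (Fin n) (Fin n) (PowerSeries R)) = 1 ∧
        cUnits R n g₂⁻¹ * D * cUnits R n h₂ =
          psUnits R n k₁ * (cUnits R n g₁⁻¹ * D * cUnits R n h₁) * psUnits R n k₂)) ∧
    (∀ x : GL (Fin n) (LaurentSeries R),
      (∃ u v : GL (Fin n) (PowerSeries R), x = psUnits R n u * D * psUnits R n v) →
      ∃ g h : GL (Fin n) R, ∃ k₁ k₂ : GL (Fin n) (PowerSeries R),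
        redMat R n (k₁ : Matrix (Fin n) (Fin n) (PowerSeries R)) = 1 ∧
        redMat R n (k₂ : Matrix (Fin n) (Fin n) (PowerSeries R)) = 1 ∧
        x = psUnits R n k₁ * (cUnits R n g⁻¹ * D * cUnits R n h) * psUnits R n k₂) := by
  simp only [redMat_eq_one_iff, ← psUnits_constUnits]
  refine ⟨fun g₁ h₁ g₂ h₂ => ?_, ?_⟩
  · rw [exists_ker_mul_mul_ker_iff _ _ _ redUnits_constUnits,
      ← isZipPair_iff_exists_psUnits_mul_eq hD]
    constructor
    · rintro ⟨pm, pp, hpm, hpp, hlevi, rfl, rfl⟩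
      simp only [_root_.mul_inv_rev, inv_inv, mul_inv_cancel_left]
      exact ⟨hpm, hpp, hlevi⟩
    · exact fun ⟨hpm, hpp, hlevi⟩ => ⟨_, _, hpm, hpp, hlevi, by group, by group⟩
  · rintro x ⟨u, v, rfl⟩
    exact exists_eq_ker_mul_mul_ker _ _ _ redUnits_constUnits D u v

/-- the map `(g, h) ↦ K₁ · g⁻¹ D h · K₁` induces a well-defined bijection from
the set of orbits of the zip group `E(R)` on `GL_n(R) × GL_n(R)` onto the set of double
cosets `K₁ x K₁` with `x ∈ K D K`.  The first clause says two pairs are in the same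
`E(R)`-orbit iff the corresponding elements lie in the same `K₁`-double coset
(well-definedness and injectivity); the second clause is surjectivity. -/
theorem viehmann_stmt6 (R : Type*) [CommRing R] (n : ℕ) (hn : 1 ≤ n)
    (d : Fin n → ℤ) (hd : Antitone d)
    (D : GL (Fin n) (LaurentSeries R))
    (hD : (D : Matrix (Fin n) (Fin n) (LaurentSeries R)) =
      Matrix.diagonal fun i => HahnSeries.single (d i) (1 : R)) :
    (∀ g₁ h₁ g₂ h₂ : GL (Fin n) R,
      (∃ pm pp : GL (Fin n) R,
        (∀ i j : Fin n, d i > d j → (pm : Matrix (Fin n) (Fin n) R) i j = 0) ∧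
        (∀ i j : Fin n, d i < d j → (pp : Matrix (Fin n) (Fin n) R) i j = 0) ∧
        (∀ i j : Fin n, d i = d j →
          (pm : Matrix (Fin n) (Fin n) R) i j = (pp : Matrix (Fin n) (Fin n) R) i j) ∧
        g₂ = pm⁻¹ * g₁ ∧ h₂ = pp⁻¹ * h₁) ↔
      (∃ k₁ k₂ : GL (Fin n) (PowerSeries R),
        redMat R n (k₁ : Matrix (Fin n) (Fin n) (PowerSeries R)) = 1 ∧
        redMat R n (k₂ : Matrix (Fin n) (Fin n) (PowerSeries R)) = 1 ∧
        cUnits R n g₂⁻¹ * D * cUnits R n h₂ =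
          psUnits R n k₁ * (cUnits R n g₁⁻¹ * D * cUnits R n h₁) * psUnits R n k₂)) ∧
    (∀ x : GL (Fin n) (LaurentSeries R),
      (∃ u v : GL (Fin n) (PowerSeries R), x = psUnits R n u * D * psUnits R n v) →
      ∃ g h : GL (Fin n) R, ∃ k₁ k₂ : GL (Fin n) (PowerSeries R),
        redMat R n (k₁ : Matrix (Fin n) (Fin n) (PowerSeries R)) = 1 ∧
        redMat R n (k₂ : Matrix (Fin n) (Fin n) (PowerSeries R)) = 1 ∧
        x = psUnits R n k₁ * (cUnits R n g⁻¹ * D * cUnits R n h) * psUnits R n k₂) :=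
  viehmann_stmt6_general R n d D hD
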